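/- arXiv:math/0412334 — 3 statements merged into one kernel-verified Lean document; each statement's English description precedes it below -/
import Mathlib

section
/- For all real numbers u with 0 ≤ u ≤ K, K > 0, s ≥ 0, and any integer n ≥ 2, one has e^{su} - 1 ≤ Σ_{k=1}^{n-1} (s^k/k!) u^k + ((e^{sK} - Σ_{k=0}^{n-1} s^k K^k / k!)/K^n) u^n. -/
open Finset Nat

namespace Real

theorem summable_pow_div_factorial_add (n : ℕ) (x : ℝ) :
    Summable (fun k : ℕ => x ^ k / (k + n)!) := by
  refine (summable_pow_div_factorial |x|).of_norm_bounded fun k => ?_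
  rw [norm_div, norm_pow, norm_of_nonneg (by positivity : (0 : ℝ) ≤ (k + n)!)]
  gcongr
  exacts [le_of_eq (norm_eq_abs x), Nat.le_add_right k n]

theorem exp_sub_sum_range_eq_pow_mul_tsum (n : ℕ) (x : ℝ) :
    exp x - ∑ k ∈ range n, x ^ k / k ! = x ^ n * ∑' k : ℕ, x ^ k / (k + n)! := by
  rw [exp_eq_exp_ℝ, NormedSpace.exp_eq_tsum_div]
  beta_reduce
  rw [← (summable_pow_div_factorial x).sum_add_tsum_nat_add n, add_sub_cancel_left,
    ← tsum_mul_left]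
  congr 1 with k
  ring

theorem tsum_pow_div_factorial_add_mono (n : ℕ) {x y : ℝ} (hx : 0 ≤ x) (hxy : x ≤ y) :
    ∑' k : ℕ, x ^ k / (k + n)! ≤ ∑' k : ℕ, y ^ k / (k + n)! :=
  (summable_pow_div_factorial_add n x).tsum_le_tsum (fun k => by gcongr)
    (summable_pow_div_factorial_add n y)

/-- The Taylor remainder of `exp` at order `n` is `x ^ n` times a nondecreasing function on
`[0, ∞)`, hence it shrinks at least by the factor `t ^ n` under scaling by `t ∈ [0, 1]`. -/
theorem exp_mul_sub_sum_range_le_pow_mul (n : ℕ) {t x : ℝ} (ht₀ : 0 ≤ t) (ht₁ : t ≤ 1)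
    (hx : 0 ≤ x) :
    exp (t * x) - ∑ k ∈ range n, (t * x) ^ k / k ! ≤
      t ^ n * (exp x - ∑ k ∈ range n, x ^ k / k !) := by
  rw [exp_sub_sum_range_eq_pow_mul_tsum, exp_sub_sum_range_eq_pow_mul_tsum, mul_pow, mul_assoc]
  gcongr t ^ n * (x ^ n * ?_)
  exact tsum_pow_div_factorial_add_mono n (by positivity) (mul_le_of_le_one_left hx ht₁)

end Real

theorem sum_Icc_one_sub_one_eq_sum_range_sub {M : Type*} [AddCommGroup M] (f : ℕ → M)
    {n : ℕ} (hn : 1 ≤ n) :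
    ∑ k ∈ Icc 1 (n - 1), f k = ∑ k ∈ range n, f k - f 0 := by
  rw [range_eq_Ico, sum_eq_sum_Ico_succ_bot (by omega), add_sub_cancel_left,
    ← Ico_add_one_right_eq_Icc, Nat.sub_add_cancel hn]

theorem taylor_exp_remainder_bound (u K s : ℝ) (hu : 0 ≤ u) (huK : u ≤ K)
    (hK : 0 < K) (hs : 0 ≤ s) (n : ℕ) (hn : 2 ≤ n) :
    Real.exp (s * u) - 1 ≤
      (∑ k ∈ Finset.Icc 1 (n - 1), s ^ k / (Nat.factorial k : ℝ) * u ^ k) +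
        ((Real.exp (s * K) - ∑ k ∈ Finset.range n, s ^ k * K ^ k / (Nat.factorial k : ℝ)) / K ^ n)
          * u ^ n := by
  have hscale := Real.exp_mul_sub_sum_range_le_pow_mul n (div_nonneg hu hK.le)
    ((div_le_one hK).2 huK) (mul_nonneg hs hK.le)
  rw [show u / K * (s * K) = s * u by field_simp] at hscale
  have hlow : ∑ k ∈ Icc 1 (n - 1), s ^ k / (k ! : ℝ) * u ^ k =
      ∑ k ∈ range n, (s * u) ^ k / (k ! : ℝ) - 1 := by
    simpa [mul_pow, div_mul_eq_mul_div] using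
      sum_Icc_one_sub_one_eq_sum_range_sub (fun k => (s * u) ^ k / (k ! : ℝ)) (by omega)
  simp only [hlow, ← mul_pow]
  rw [div_pow] at hscale
  have hreorder : (u ^ n / K ^ n) * (Real.exp (s * K) - ∑ k ∈ range n, (s * K) ^ k / (k ! : ℝ)) =
      (Real.exp (s * K) - ∑ k ∈ range n, (s * K) ^ k / (k ! : ℝ)) / K ^ n * u ^ n := by ring
  linarith
end

section
/- With the same compound Poisson setup, E[‖Z_R‖] ≥ e^{-λ} λ E[‖Z_1‖], where λ = ν({‖u‖ > R}). In particular, for the α-stable Lévy measure with α ∈ (1,2), (σ_1/((α-1) R^{α-1})) e^{-σ_1/(α R^α)} ≤ E[‖Z_R‖] ≤ σ_1/((α-1) R^{α-1}). -/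
/-!
Conditioning on `N = n` and using the independence of `N` from the jumps,
`E‖Z_R‖ = ∑ₙ P(N = n) E‖Z_1 + ⋯ + Z_n‖`. The triangle inequality bounds the `n`-th term by
`n P(N = n) E‖Z_1‖`, and the Poisson mean `∑ₙ n P(N = n) = λ` gives `E‖Z_R‖ ≤ λ E‖Z_1‖`; keeping
only the term `n = 1` gives `E‖Z_R‖ ≥ e^{-λ} λ E‖Z_1‖`. For the α-stable Lévy measure the polar
form gives the tail `ν{‖u‖ > t} = σ_1 t^{-α} / α`, hence `λ = σ_1 / (α R^α)`, and the layer-cake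
formula gives `λ E‖Z_1‖ = ∫_{‖u‖ > R} ‖u‖ dν = σ_1 R^{1-α} / (α - 1)`.
-/

open MeasureTheory ProbabilityTheory Set
open scoped ENNReal Nat

theorem lintegral_Ioi_rpow_of_lt {a t : ℝ} (ha : a < -1) (ht : 0 < t) :
    ∫⁻ r in Ioi t, ENNReal.ofReal (r ^ a) = ENNReal.ofReal (-t ^ (a + 1) / (a + 1)) := by
  rw [← ofReal_integral_eq_lintegral_ofReal (integrableOn_Ioi_rpow_of_lt ha ht)
    ((ae_restrict_iff' measurableSet_Ioi).mpr (.of_forall fun r hr => by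
      have : 0 < r := ht.trans hr; positivity)), integral_Ioi_rpow_of_lt ha ht]

section Truncation

variable {E : Type*} [NormedAddCommGroup E] [MeasurableSpace E] [OpensMeasurableSpace E]

theorem setLIntegral_enorm_norm_gt (ν : Measure E) {R : ℝ} (hR : 0 ≤ R) :
    ∫⁻ u in {u | R < ‖u‖}, ‖u‖ₑ ∂ν
      = ENNReal.ofReal R * ν {u | R < ‖u‖} + ∫⁻ t in Ioi R, ν {u | t < ‖u‖} := by
  simp_rw [← ofReal_norm]
  rw [lintegral_eq_lintegral_meas_lt _ (.of_forall fun u => norm_nonneg u)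
    measurable_norm.aemeasurable, ← Ioc_union_Ioi_eq_Ioi hR,
    lintegral_union measurableSet_Ioi (Ioc_disjoint_Ioi le_rfl)]
  have restrict_eq (t : ℝ) : ν.restrict {u | R < ‖u‖} {u | t < ‖u‖} = ν {u | max t R < ‖u‖} := by
    rw [Measure.restrict_apply (measurableSet_lt measurable_const measurable_norm)]
    congr 1
    ext u
    simp
  simp_rw [restrict_eq]
  congr 1
  · rw [setLIntegral_congr_fun measurableSet_Ioc fun t ht => by rw [max_eq_right ht.2],
      setLIntegral_const, Real.volume_Ioc, sub_zero, mul_comm]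
  · exact setLIntegral_congr_fun measurableSet_Ioi fun t ht => by rw [max_eq_left (le_of_lt ht)]

theorem setLIntegral_enorm_norm_gt_of_tail {ν : Measure E} {α R : ℝ} {c : ℝ≥0∞}
    (htail : ∀ t : ℝ, 0 < t → ν {u | t < ‖u‖} = c * ENNReal.ofReal (t ^ (-α) / α))
    (hα : 1 < α) (hR : 0 < R) :
    ∫⁻ u in {u | R < ‖u‖}, ‖u‖ₑ ∂ν = c * ENNReal.ofReal (R ^ (1 - α) / (α - 1)) := by
  have hα0 : 0 < α := by linarith
  have hα1 : α - 1 ≠ 0 := by linarith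
  have hα1' : 1 - α ≠ 0 := by linarith
  have tail_integral : ∫⁻ t in Ioi R, ENNReal.ofReal (t ^ (-α) / α)
      = ENNReal.ofReal (R ^ (1 - α) / (α * (α - 1))) := by
    simp_rw [div_eq_mul_inv _ α, ENNReal.ofReal_mul' (inv_nonneg.mpr hα0.le)]
    rw [lintegral_mul_const' _ _ ENNReal.ofReal_ne_top, lintegral_Ioi_rpow_of_lt (by linarith) hR,
      ← ENNReal.ofReal_mul' (inv_nonneg.mpr hα0.le)]
    congr 1
    rw [show -α + 1 = 1 - α by ring]
    field_simp
    ring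
  rw [setLIntegral_enorm_norm_gt ν hR.le, htail R hR,
    setLIntegral_congr_fun measurableSet_Ioi fun t ht => htail t (hR.trans ht),
    lintegral_const_mul _ (by fun_prop), tail_integral, mul_left_comm, ← ENNReal.ofReal_mul hR.le,
    ← mul_add, ← ENNReal.ofReal_add (by positivity) (by positivity)]
  congr 2
  rw [show (1 : ℝ) - α = -α + 1 by ring, Real.rpow_add hR, Real.rpow_one]
  field_simp
  ring

end Truncation

section StableLevyMeasure

variable {E : Type*} [NormedAddCommGroup E] [NormedSpace ℝ E] [MeasurableSpace E]
  [OpensMeasurableSpace E]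

def IsStableLevyMeasure (ν : Measure E) (σ : Measure (Metric.sphere (0 : E) 1)) (α : ℝ) : Prop :=
  ∀ B : Set E, MeasurableSet B →
    ν B = ∫⁻ ξ, (∫⁻ r in Ioi (0 : ℝ),
      B.indicator (fun _ => ENNReal.ofReal (r ^ (-1 - α))) (r • (ξ : E))) ∂σ

variable {ν : Measure E} {σ : Measure (Metric.sphere (0 : E) 1)} {α : ℝ}

theorem IsStableLevyMeasure.measure_norm_gt (hν : IsStableLevyMeasure ν σ α) (hα : 0 < α)
    {t : ℝ} (ht : 0 < t) : ν {u | t < ‖u‖} = σ univ * ENNReal.ofReal (t ^ (-α) / α) := by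
  have radial (ξ : Metric.sphere (0 : E) 1) (r : ℝ) (hr : r ∈ Ioi 0) :
      {u : E | t < ‖u‖}.indicator (fun _ => ENNReal.ofReal (r ^ (-1 - α))) (r • (ξ : E))
        = (Ioi t).indicator (fun r => ENNReal.ofReal (r ^ (-1 - α))) r := by
    have hnorm : ‖r • (ξ : E)‖ = r := by
      rw [norm_smul, norm_eq_of_mem_sphere ξ, Real.norm_of_nonneg (le_of_lt hr), mul_one]
    simp only [indicator, mem_ofPred_eq, hnorm, mem_Ioi]
  rw [hν _ (measurableSet_lt measurable_const measurable_norm), mul_comm, ← lintegral_const]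
  refine lintegral_congr fun ξ => ?_
  rw [setLIntegral_congr_fun measurableSet_Ioi (radial ξ), lintegral_indicator measurableSet_Ioi,
    Measure.restrict_restrict measurableSet_Ioi, Ioi_inter_Ioi, max_eq_left ht.le,
    lintegral_Ioi_rpow_of_lt (by linarith) ht, show -1 - α + 1 = -α by ring, neg_div_neg_eq]


theorem IsStableLevyMeasure.measure_norm_gt_eq [IsFiniteMeasure σ] (hν : IsStableLevyMeasure ν σ α)
    (hα : 0 < α) {R : ℝ} (hR : 0 < R) :
    ν {u | R < ‖u‖} = ENNReal.ofReal ((σ univ).toReal / (α * R ^ α)) := by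
  rw [hν.measure_norm_gt hα hR]
  conv_lhs => rw [← ENNReal.ofReal_toReal (measure_ne_top σ univ)]
  rw [← ENNReal.ofReal_mul ENNReal.toReal_nonneg, Real.rpow_neg hR.le]
  congr 1
  field_simp

theorem IsStableLevyMeasure.setLIntegral_enorm_norm_gt [IsFiniteMeasure σ]
    (hν : IsStableLevyMeasure ν σ α) (hα : 1 < α) {R : ℝ} (hR : 0 < R) :
    ∫⁻ u in {u | R < ‖u‖}, ‖u‖ₑ ∂ν
      = ENNReal.ofReal ((σ univ).toReal / ((α - 1) * R ^ (α - 1))) := by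
  rw [setLIntegral_enorm_norm_gt_of_tail (fun t ht => hν.measure_norm_gt (by linarith) ht) hα hR]
  conv_lhs => rw [← ENNReal.ofReal_toReal (measure_ne_top σ univ)]
  rw [← ENNReal.ofReal_mul ENNReal.toReal_nonneg, show 1 - α = -(α - 1) by ring,
    Real.rpow_neg hR.le]
  congr 1
  field_simp

end StableLevyMeasure

theorem hasSum_natCast_mul_poisson (lam : ℝ) :
    HasSum (fun n : ℕ => n * (Real.exp (-lam) * lam ^ n / n !)) lam := by
  rw [← hasSum_nat_add_iff' 1]
  have shift (n : ℕ) : ((n + 1 : ℕ) : ℝ) * (Real.exp (-lam) * lam ^ (n + 1) / (n + 1)!)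
      = lam * (Real.exp (-lam) * (lam ^ n / n !)) := by
    rw [Nat.factorial_succ, pow_succ]
    push_cast
    field_simp
  have poisson_total : HasSum (fun n : ℕ => Real.exp (-lam) * (lam ^ n / n !)) 1 := by
    convert! (NormedSpace.expSeries_div_hasSum_exp lam).mul_left (Real.exp (-lam)) using 1
    rw [← Real.exp_eq_exp_ℝ, ← Real.exp_add, neg_add_cancel, Real.exp_zero]
  have := poisson_total.mul_left lam
  rw [mul_one] at this
  simpa only [Finset.range_one, Finset.sum_singleton, Nat.cast_zero, zero_mul, sub_zero, shift]

theorem tsum_natCast_mul_poisson {lam : ℝ} (hlam : 0 ≤ lam) :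
    ∑' n : ℕ, (n : ℝ≥0∞) * ENNReal.ofReal (Real.exp (-lam) * lam ^ n / n !)
      = ENNReal.ofReal lam := by
  simp_rw [← ENNReal.ofReal_natCast, ← ENNReal.ofReal_mul (Nat.cast_nonneg _)]
  rw [← ENNReal.ofReal_tsum_of_nonneg (fun n => by positivity)
    (hasSum_natCast_mul_poisson lam).summable, (hasSum_natCast_mul_poisson lam).tsum_eq]

theorem setLIntegral_eq_measure_mul_lintegral_of_indepFun {Ω β γ : Type*} [MeasurableSpace Ω]
    [MeasurableSpace β] [MeasurableSpace γ] {μ : Measure Ω} {N : Ω → β} {X : Ω → γ}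
    (hN : Measurable N) (hX : Measurable X) (hNX : IndepFun N X μ) {s : Set β}
    (hs : MeasurableSet s) {g : γ → ℝ≥0∞} (hg : Measurable g) :
    ∫⁻ ω in N ⁻¹' s, g (X ω) ∂μ = μ (N ⁻¹' s) * ∫⁻ ω, g (X ω) ∂μ := by
  have hind : IndepFun (fun ω => s.indicator (1 : β → ℝ≥0∞) (N ω)) (fun ω => g (X ω)) μ :=
    hNX.comp (measurable_one.indicator hs) hg
  calc ∫⁻ ω in N ⁻¹' s, g (X ω) ∂μ = ∫⁻ ω, s.indicator 1 (N ω) * g (X ω) ∂μ := by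
        rw [← lintegral_indicator (hN hs)]
        congr 1 with ω
        by_cases hω : N ω ∈ s <;> simp [hω]
    _ = (∫⁻ ω, s.indicator 1 (N ω) ∂μ) * ∫⁻ ω, g (X ω) ∂μ :=
        lintegral_mul_eq_lintegral_mul_lintegral_of_indepFun''
          ((measurable_one.indicator hs).comp hN).aemeasurable (hg.comp hX).aemeasurable hind
    _ = μ (N ⁻¹' s) * ∫⁻ ω, g (X ω) ∂μ := by
        rw [← lintegral_indicator_one (hN hs)]
        rfl

def randomSum {Ω E : Type*} [AddCommMonoid E] (N : Ω → ℕ) (Z : ℕ → Ω → E) (ω : Ω) : E :=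
  ∑ k ∈ Finset.Icc 1 (N ω), Z k ω

section RandomSum

variable {Ω E : Type*} [MeasurableSpace Ω] [NormedAddCommGroup E] [MeasurableSpace E]
  [BorelSpace E] {μ : Measure Ω} {N : Ω → ℕ} {Z : ℕ → Ω → E}

theorem measurable_randomSum [SecondCountableTopology E] (hN : Measurable N)
    (hZ : ∀ k, Measurable (Z k)) : Measurable (randomSum N Z) := by
  have : Measurable fun p : Ω × ℕ => ∑ k ∈ Finset.Icc 1 p.2, Z k p.1 :=
    measurable_from_prod_countable_left fun n =>
      Finset.measurable_sum (Finset.Icc 1 n) fun k _ => hZ k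
  exact this.comp (measurable_id.prodMk hN)

theorem setLIntegral_enorm_randomSum_le (hN : Measurable N) (hZ : ∀ k, Measurable (Z k))
    (hNZ : ∀ k, IndepFun N (Z k) μ) {m : ℝ≥0∞} (hm : ∀ k, 1 ≤ k → ∫⁻ ω, ‖Z k ω‖ₑ ∂μ = m) (n : ℕ) :
    ∫⁻ ω in {ω | N ω = n}, ‖randomSum N Z ω‖ₑ ∂μ ≤ n * μ {ω | N ω = n} * m := by
  have hs : MeasurableSet {ω | N ω = n} := hN (measurableSet_singleton n)
  calc ∫⁻ ω in {ω | N ω = n}, ‖randomSum N Z ω‖ₑ ∂μ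
      = ∫⁻ ω in {ω | N ω = n}, ‖∑ k ∈ Finset.Icc 1 n, Z k ω‖ₑ ∂μ :=
        setLIntegral_congr_fun hs fun ω hω => by rw [randomSum, mem_ofPred_eq.mp hω]
    _ ≤ ∫⁻ ω in {ω | N ω = n}, ∑ k ∈ Finset.Icc 1 n, ‖Z k ω‖ₑ ∂μ :=
        lintegral_mono fun ω => enorm_sum_le _ _
    _ = ∑ k ∈ Finset.Icc 1 n, ∫⁻ ω in {ω | N ω = n}, ‖Z k ω‖ₑ ∂μ :=
        lintegral_finsetSum _ fun k _ => (hZ k).enorm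
    _ = ∑ k ∈ Finset.Icc 1 n, μ {ω | N ω = n} * m :=
        Finset.sum_congr rfl fun k hk => by
          rw [← hm k (Finset.mem_Icc.mp hk).1]
          exact setLIntegral_eq_measure_mul_lintegral_of_indepFun hN (hZ k) (hNZ k)
            (measurableSet_singleton n) measurable_enorm
    _ = n * μ {ω | N ω = n} * m := by
        rw [Finset.sum_const, Nat.card_Icc, add_tsub_cancel_right, nsmul_eq_mul, mul_assoc]

theorem lintegral_eq_tsum_setLIntegral_fiber (hN : Measurable N) (f : Ω → ℝ≥0∞) :
    ∫⁻ ω, f ω ∂μ = ∑' n, ∫⁻ ω in {ω | N ω = n}, f ω ∂μ := by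
  have := lintegral_iUnion (μ := μ) (fun n => hN (measurableSet_singleton n))
    (pairwise_disjoint_fiber N) f
  rwa [← preimage_iUnion, iUnion_of_singleton, preimage_univ, Measure.restrict_univ] at this

theorem lintegral_enorm_randomSum_le_of_poisson (hN : Measurable N) (hZ : ∀ k, Measurable (Z k))
    (hNZ : ∀ k, IndepFun N (Z k) μ) {m : ℝ≥0∞} (hm : ∀ k, 1 ≤ k → ∫⁻ ω, ‖Z k ω‖ₑ ∂μ = m)
    {lam : ℝ} (hlam : 0 ≤ lam)
    (hPoisson : ∀ n : ℕ, μ {ω | N ω = n} = ENNReal.ofReal (Real.exp (-lam) * lam ^ n / n !)) :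
    ∫⁻ ω, ‖randomSum N Z ω‖ₑ ∂μ ≤ ENNReal.ofReal lam * m :=
  calc ∫⁻ ω, ‖randomSum N Z ω‖ₑ ∂μ = ∑' n, ∫⁻ ω in {ω | N ω = n}, ‖randomSum N Z ω‖ₑ ∂μ :=
        lintegral_eq_tsum_setLIntegral_fiber hN _
    _ ≤ ∑' n : ℕ, n * μ {ω | N ω = n} * m :=
        ENNReal.tsum_le_tsum (setLIntegral_enorm_randomSum_le hN hZ hNZ hm)
    _ = ENNReal.ofReal lam * m := by
        rw [ENNReal.tsum_mul_right]
        simp_rw [hPoisson, tsum_natCast_mul_poisson hlam]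

theorem measure_mul_lintegral_enorm_le_lintegral_enorm_randomSum (hN : Measurable N)
    (hZ₁ : Measurable (Z 1)) (hNZ₁ : IndepFun N (Z 1) μ) :
    μ {ω | N ω = 1} * ∫⁻ ω, ‖Z 1 ω‖ₑ ∂μ ≤ ∫⁻ ω, ‖randomSum N Z ω‖ₑ ∂μ :=
  calc μ {ω | N ω = 1} * ∫⁻ ω, ‖Z 1 ω‖ₑ ∂μ = ∫⁻ ω in {ω | N ω = 1}, ‖Z 1 ω‖ₑ ∂μ :=
        (setLIntegral_eq_measure_mul_lintegral_of_indepFun hN hZ₁ hNZ₁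
          (measurableSet_singleton 1) measurable_enorm).symm
    _ = ∫⁻ ω in {ω | N ω = 1}, ‖randomSum N Z ω‖ₑ ∂μ :=
        setLIntegral_congr_fun (hN (measurableSet_singleton 1)) fun ω hω => by
          rw [randomSum, mem_ofPred_eq.mp hω, Finset.Icc_self, Finset.sum_singleton]
    _ ≤ ∫⁻ ω, ‖randomSum N Z ω‖ₑ ∂μ := setLIntegral_le_lintegral _ _

theorem integral_norm_randomSum_bounds_of_poisson [SecondCountableTopology E] (hN : Measurable N)
    (hZ : ∀ k, Measurable (Z k)) (hNZ : ∀ k, IndepFun N (Z k) μ) {m : ℝ} (hm₀ : 0 ≤ m)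
    (hm : ∀ k, 1 ≤ k → ∫⁻ ω, ‖Z k ω‖ₑ ∂μ = ENNReal.ofReal m) {lam : ℝ} (hlam : 0 ≤ lam)
    (hPoisson : ∀ n : ℕ, μ {ω | N ω = n} = ENNReal.ofReal (Real.exp (-lam) * lam ^ n / n !)) :
    Real.exp (-lam) * (lam * m) ≤ ∫ ω, ‖randomSum N Z ω‖ ∂μ ∧
      ∫ ω, ‖randomSum N Z ω‖ ∂μ ≤ lam * m := by
  have upper := lintegral_enorm_randomSum_le_of_poisson hN hZ hNZ hm hlam hPoisson
  have lower := measure_mul_lintegral_enorm_le_lintegral_enorm_randomSum hN (hZ 1) (hNZ 1)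
  rw [hPoisson 1, hm 1 le_rfl, pow_one, Nat.factorial_one, Nat.cast_one, div_one,
    ← ENNReal.ofReal_mul (by positivity), mul_assoc] at lower
  rw [← ENNReal.ofReal_mul hlam] at upper
  rw [integral_norm_eq_lintegral_enorm (measurable_randomSum hN hZ).aestronglyMeasurable]
  refine ⟨?_, ENNReal.toReal_le_of_le_ofReal (by positivity) upper⟩
  have := ENNReal.toReal_mono (ne_top_of_le_ne_top ENNReal.ofReal_ne_top upper) lower
  rwa [ENNReal.toReal_ofReal (by positivity)] at this

end RandomSum

theorem compound_poisson_expected_norm_two_sided_general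
    {Ω : Type*} [MeasureSpace Ω]
    {d : ℕ} (ν : Measure (EuclideanSpace ℝ (Fin d))) (α σ1 R lam : ℝ)
    (hα1 : 1 < α) (hR : 0 < R) (hlam0 : 0 < lam)
    (σ : Measure (Metric.sphere (0 : EuclideanSpace ℝ (Fin d)) 1)) [IsFiniteMeasure σ]
    (hσ1 : σ1 = (σ Set.univ).toReal)
    (hν : ∀ B : Set (EuclideanSpace ℝ (Fin d)), MeasurableSet B →
      ν B = ∫⁻ ξ, (∫⁻ r in Set.Ioi (0 : ℝ),
        B.indicator (fun _ => ENNReal.ofReal (r ^ (-1 - α)))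
          (r • (ξ : EuclideanSpace ℝ (Fin d)))) ∂σ)
    (N : Ω → ℕ) (Z : ℕ → Ω → EuclideanSpace ℝ (Fin d))
    (hNmeas : Measurable N) (hZmeas : ∀ k, Measurable (Z k))
    (hlam : ENNReal.ofReal lam = ν {u | R < ‖u‖})
    (hlaw : ∀ k : ℕ, 1 ≤ k →
      Measure.map (Z k) ℙ = (ENNReal.ofReal lam)⁻¹ • ν.restrict {u | R < ‖u‖})
    (hNindep : IndepFun N (fun ω k => Z k ω) ℙ)
    (hPoisson : ∀ n : ℕ,
      ℙ {ω | N ω = n} = ENNReal.ofReal (Real.exp (-lam) * lam ^ n / (Nat.factorial n : ℝ))) :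
    Real.exp (-lam) * (lam * ∫ ω, ‖Z 1 ω‖) ≤ (∫ ω, ‖∑ k ∈ Finset.Icc 1 (N ω), Z k ω‖) ∧
      σ1 / ((α - 1) * R ^ (α - 1)) * Real.exp (-(σ1 / (α * R ^ α)))
        ≤ (∫ ω, ‖∑ k ∈ Finset.Icc 1 (N ω), Z k ω‖) ∧
      (∫ ω, ‖∑ k ∈ Finset.Icc 1 (N ω), Z k ω‖) ≤ σ1 / ((α - 1) * R ^ (α - 1)) := by
  have hν' : IsStableLevyMeasure ν σ α := hν
  have hσ₀ : 0 ≤ σ1 := hσ1 ▸ ENNReal.toReal_nonneg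
  set c := σ1 / ((α - 1) * R ^ (α - 1))
  have hlam_eq : σ1 / (α * R ^ α) = lam := by
    rw [hν'.measure_norm_gt_eq (by linarith) hR, ← hσ1,
      ENNReal.ofReal_eq_ofReal_iff hlam0.le (by positivity)] at hlam
    exact hlam.symm
  have hmoment (k : ℕ) (hk : 1 ≤ k) : ∫⁻ ω, ‖Z k ω‖ₑ = ENNReal.ofReal (c / lam) := by
    rw [← lintegral_map measurable_enorm (hZmeas k), hlaw k hk, lintegral_smul_measure,
      hν'.setLIntegral_enorm_norm_gt hα1 hR, ← hσ1, smul_eq_mul, ← ENNReal.ofReal_inv_of_pos hlam0,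
      ← ENNReal.ofReal_mul (inv_nonneg.mpr hlam0.le), inv_mul_eq_div]
  have hc : 0 ≤ c / lam := by positivity
  have hZ₁ : ∫ ω, ‖Z 1 ω‖ = c / lam := by
    rw [integral_norm_eq_lintegral_enorm (hZmeas 1).aestronglyMeasurable, hmoment 1 le_rfl,
      ENNReal.toReal_ofReal hc]
  have hlam_c : lam * (c / lam) = c := mul_div_cancel₀ c hlam0.ne'
  obtain ⟨lower, upper⟩ := integral_norm_randomSum_bounds_of_poisson hNmeas hZmeas
    (fun k => hNindep.comp measurable_id (measurable_pi_apply k)) hc hmoment hlam0.le hPoisson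
  rw [hlam_c] at lower upper
  refine ⟨?_, ?_, upper⟩
  · rw [hZ₁, hlam_c]
    exact lower
  · rw [hlam_eq, mul_comm]
    exact lower

/-- Lower bound for the expected norm of a compound Poisson sum, and the two-sided
bound in the α-stable case. -/
theorem compound_poisson_expected_norm_two_sided
    {Ω : Type*} [MeasureSpace Ω] [IsProbabilityMeasure (ℙ : Measure Ω)]
    {d : ℕ} (ν : Measure (EuclideanSpace ℝ (Fin d))) (α σ1 R lam : ℝ)
    (hα1 : 1 < α) (hα2 : α < 2) (hσ : 0 < σ1) (hR : 0 < R) (hlam0 : 0 < lam)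
    (σ : Measure (Metric.sphere (0 : EuclideanSpace ℝ (Fin d)) 1)) [IsFiniteMeasure σ]
    (hσ1 : σ1 = (σ Set.univ).toReal)
    (hν : ∀ B : Set (EuclideanSpace ℝ (Fin d)), MeasurableSet B →
      ν B = ∫⁻ ξ, (∫⁻ r in Set.Ioi (0 : ℝ),
        B.indicator (fun _ => ENNReal.ofReal (r ^ (-1 - α)))
          (r • (ξ : EuclideanSpace ℝ (Fin d)))) ∂σ)
    (N : Ω → ℕ) (Z : ℕ → Ω → EuclideanSpace ℝ (Fin d))
    (hNmeas : Measurable N) (hZmeas : ∀ k, Measurable (Z k))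
    (hlam : ENNReal.ofReal lam = ν {u | R < ‖u‖})
    (hlaw : ∀ k : ℕ, 1 ≤ k →
      Measure.map (Z k) ℙ = (ENNReal.ofReal lam)⁻¹ • ν.restrict {u | R < ‖u‖})
    (hiid : iIndepFun Z ℙ)
    (hNindep : IndepFun N (fun ω k => Z k ω) ℙ)
    (hPoisson : ∀ n : ℕ,
      ℙ {ω | N ω = n} = ENNReal.ofReal (Real.exp (-lam) * lam ^ n / (Nat.factorial n : ℝ))) :
    Real.exp (-lam) * (lam * ∫ ω, ‖Z 1 ω‖) ≤ (∫ ω, ‖∑ k ∈ Finset.Icc 1 (N ω), Z k ω‖) ∧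
      σ1 / ((α - 1) * R ^ (α - 1)) * Real.exp (-(σ1 / (α * R ^ α)))
        ≤ (∫ ω, ‖∑ k ∈ Finset.Icc 1 (N ω), Z k ω‖) ∧
      (∫ ω, ‖∑ k ∈ Finset.Icc 1 (N ω), Z k ω‖) ≤ σ1 / ((α - 1) * R ^ (α - 1)) :=
  compound_poisson_expected_norm_two_sided_general ν α σ1 R lam hα1 hR hlam0 σ hσ1 hν N Z hNmeas
    hZmeas hlam hlaw hNindep hPoisson
end

section
/- There exists u_1 > 3 such that |u-1|^{3/2} ≥ u(u-1) - u log u for all u ∈ (0, u_1]. -/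
open Real

lemma one_sub_div_le_log (x : ℝ) (hx : 0 < x) : 1 - 1/x ≤ Real.log x := by
  have := Real.one_sub_inv_le_log_of_pos hx
  rwa [one_div]

lemma log_b_lb : (6931/10000 + 3/11 + 174/1505 : ℝ) ≤ Real.log (301/100) := by
  have h : Real.log (301/100 : ℝ)
      = Real.log 2 + Real.log (11/10) + Real.log (11/10) + Real.log (11/10)
        + Real.log (1505/1331) := by
    rw [← Real.log_mul (by norm_num) (by norm_num),
        ← Real.log_mul (by norm_num) (by norm_num),
        ← Real.log_mul (by norm_num) (by norm_num),
        ← Real.log_mul (by norm_num) (by norm_num)]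
    norm_num
  have h2 := Real.log_two_gt_d9
  have h3 := one_sub_div_le_log (11/10) (by norm_num)
  have h4 := one_sub_div_le_log (1505/1331) (by norm_num)
  rw [h]; norm_num at h2 h3 h4 ⊢; linarith

theorem abs_pow_three_half_ge_c0 :
    ∃ u1 : ℝ, 3 < u1 ∧ ∀ u : ℝ, 0 < u → u ≤ u1 →
      u * (u - 1) - u * Real.log u ≤ |u - 1| ^ ((3 : ℝ) / 2) := by
  refine ⟨301/100, by norm_num, fun u hu hub => ?_⟩
  have hlow := one_sub_div_le_log u hu
  rcases le_or_gt u 2 with h2 | h2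
  · -- LHS ≤ (u-1)^2 ≤ |u-1|^(3/2)
    have hL : u * (u - 1) - u * Real.log u ≤ (u-1)^2 := by
      have : u * (1 - 1/u) ≤ u * Real.log u :=
        mul_le_mul_of_nonneg_left hlow hu.le
      have hu' : u * (1 - 1/u) = u - 1 := by field_simp
      nlinarith
    rcases eq_or_ne u 1 with rfl | hne
    · simp [Real.zero_rpow]
    · have ht : 0 < |u - 1| := abs_pos.mpr (sub_ne_zero.mpr hne)
      have ht1 : |u - 1| ≤ 1 := by
        rw [abs_le]; constructor <;> linarith
      have := Real.rpow_le_rpow_of_exponent_ge ht ht1 (by norm_num : (3:ℝ)/2 ≤ 2)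
      have h22 : |u-1| ^ (2:ℝ) = (u-1)^2 := by
        rw [show (2:ℝ) = ((2:ℕ):ℝ) by norm_num, Real.rpow_natCast, sq_abs]
      linarith [hL, h22 ▸ this]
  · -- 2 < u ≤ 3.01
    have hu1 : (1:ℝ) ≤ u - 1 := by linarith
    set s := Real.sqrt (u - 1) with hs
    have hs0 : 0 ≤ s := Real.sqrt_nonneg _
    have hs2 : s^2 = u - 1 := Real.sq_sqrt (by linarith)
    have hs1 : 1 ≤ s := by nlinarith [Real.sqrt_nonneg (u-1)]
    have hsb : s^2 ≤ 201/100 := by rw [hs2]; linarith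
    have habs : |u - 1| = u - 1 := abs_of_nonneg (by linarith)
    have hrpow : |u - 1| ^ ((3:ℝ)/2) = s^3 := by
      rw [habs, show (3:ℝ)/2 = (1/2) * 3 by norm_num,
          Real.rpow_mul (by linarith), ← Real.sqrt_eq_rpow,
          show (3:ℝ) = ((3:ℕ):ℝ) by norm_num, Real.rpow_natCast]
    rw [hrpow]
    -- chord bound for log on [2, 301/100]
    set θ : ℝ := (301/100 - u) / (101/100) with hθ
    have hθ0 : 0 ≤ θ := by apply div_nonneg <;> linarith
    have hθ1 : θ ≤ 1 := by rw [hθ, div_le_one (by norm_num)]; linarith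
    have hcomb : θ • (2:ℝ) + (1 - θ) • (301/100 : ℝ) = u := by
      simp only [smul_eq_mul]; rw [hθ]; field_simp; ring
    have hchord : θ * Real.log 2 + (1 - θ) * Real.log (301/100) ≤ Real.log u := by
      have := strictConcaveOn_log_Ioi.concaveOn.2 (Set.mem_Ioi.mpr (by norm_num : (0:ℝ) < 2))
        (Set.mem_Ioi.mpr (by norm_num : (0:ℝ) < 301/100)) hθ0
        (show (0:ℝ) ≤ 1 - θ by linarith) (show θ + (1 - θ) = 1 by ring)
      rw [hcomb] at this
      simpa [smul_eq_mul] using this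
    have h2 := Real.log_two_gt_d9
    have hb := log_b_lb
    have hloglin : (6931/10000 : ℝ) + (128580/334411) * (u - 2) ≤ Real.log u := by
      have e1 : θ * (6931/10000 : ℝ) ≤ θ * Real.log 2 :=
        mul_le_mul_of_nonneg_left (by norm_num at h2 ⊢; linarith) hθ0
      have e2 : (1-θ) * (6931/10000 + 3/11 + 174/1505 : ℝ) ≤ (1-θ) * Real.log (301/100) :=
        mul_le_mul_of_nonneg_left hb (by linarith)
      have hθu : θ = (301/100 - u) / (101/100) := hθ
      have : θ * (6931/10000 : ℝ) + (1-θ) * (6931/10000 + 3/11 + 174/1505 : ℝ)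
          = 6931/10000 + (128580/334411) * (u - 2) := by
        rw [hθu]; field_simp; ring
      linarith
    have hmul : u * ((6931/10000 : ℝ) + (128580/334411) * (u - 2)) ≤ u * Real.log u :=
      mul_le_mul_of_nonneg_left hloglin hu.le
    have hu' : u = s^2 + 1 := by linarith
    nlinarith [hmul, hu', hs1, hsb, sq_nonneg (s-1), sq_nonneg (s^2 - 201/100),
      mul_nonneg (sub_nonneg.mpr hs1) (sub_nonneg.mpr hsb),
      sq_nonneg (s*(s-1)), mul_nonneg (mul_nonneg hs0 hs0) (sub_nonneg.mpr hs1)]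
end
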